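/- In GL(2, ℤ/8ℤ), the four subgroups ⟨diag(1,−1), 5·Id, [[1,1],[−2,1]]⟩, ⟨diag(−1,1), 5·Id, [[1,1],[−2,1]]⟩, ⟨diag(1,−1), 5·Id, [[−1,−1],[2,−1]]⟩ and ⟨diag(−1,1), 5·Id, [[−1,−1],[2,−1]]⟩ are all equal to N_{−2,0}(8), the subgroup generated by all invertible matrices of the form [[a, b],[−2b, a]] (a, b ∈ ℤ/8ℤ) together with diag(−1,1). -/
import Mathlib


open scoped MatrixGroups

/-- The subgroup of `GL(2, ℤ/8ℤ)` generated by the elements whose underlying matrices lie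
in the set `S` of matrices. -/
def glGen8 (S : Set (Matrix (Fin 2) (Fin 2) (ZMod 8))) : Subgroup (GL (Fin 2) (ZMod 8)) :=
  Subgroup.closure {g : GL (Fin 2) (ZMod 8) | (g : Matrix (Fin 2) (Fin 2) (ZMod 8)) ∈ S}

/-- The Cartan subgroup `C_{−2,0}(8)`: all invertible matrices `[[a, b],[−2b, a]]` with
`a, b ∈ ℤ/8ℤ`, as a subset of `GL(2, ℤ/8ℤ)`. -/
def cartanNeg2Mod8 : Set (GL (Fin 2) (ZMod 8)) :=
  {g | ∃ a b : ZMod 8, (g : Matrix (Fin 2) (Fin 2) (ZMod 8)) = !![a, b; -2 * b, a]}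

/-- `N_{−2,0}(8)`, the subgroup of `GL(2, ℤ/8ℤ)` generated by `C_{−2,0}(8)` and
`diag(−1,1)`. -/
def normalizerNeg2Mod8 : Subgroup (GL (Fin 2) (ZMod 8)) :=
  Subgroup.closure (cartanNeg2Mod8 ∪
    {g : GL (Fin 2) (ZMod 8) | (g : Matrix (Fin 2) (Fin 2) (ZMod 8)) = !![-1, 0; 0, 1]})

section Stmt14Aux

open Matrix

/-- diag(1,-1) as a unit. -/
def dU : GL (Fin 2) (ZMod 8) := ⟨!![1,0;0,-1], !![1,0;0,-1], by decide, by decide⟩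
/-- diag(-1,1) as a unit. -/
def DU : GL (Fin 2) (ZMod 8) := ⟨!![-1,0;0,1], !![-1,0;0,1], by decide, by decide⟩
/-- 5·Id as a unit. -/
def fU : GL (Fin 2) (ZMod 8) := ⟨!![5,0;0,5], !![5,0;0,5], by decide, by decide⟩
/-- [[1,1],[-2,1]] as a unit. -/
def mU : GL (Fin 2) (ZMod 8) := ⟨!![1,1;-2,1], !![3,5;6,3], by decide, by decide⟩
/-- [[-1,-1],[2,-1]] as a unit. -/
def m2U : GL (Fin 2) (ZMod 8) := ⟨!![-1,-1;2,-1], !![5,3;2,5], by decide, by decide⟩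
/-- -Id as a unit. -/
def negIU : GL (Fin 2) (ZMod 8) := ⟨!![-1,0;0,-1], !![-1,0;0,-1], by decide, by decide⟩

/-- `G1 = ⟨diag(1,-1), 5·Id, [[1,1],[-2,1]]⟩`. -/
def G1 : Subgroup (GL (Fin 2) (ZMod 8)) :=
  glGen8 {!![1, 0; 0, -1], (5 : Matrix (Fin 2) (Fin 2) (ZMod 8)), !![1, 1; -2, 1]}

lemma hdG1 : dU ∈ G1 := Subgroup.subset_closure (Or.inl rfl)
lemma hfG1 : fU ∈ G1 := Subgroup.subset_closure (Or.inr (Or.inl (by decide)))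
lemma hmG1 : mU ∈ G1 := Subgroup.subset_closure (Or.inr (Or.inr rfl))
lemma hnG1 : dU * mU * dU ∈ G1 := mul_mem (mul_mem hdG1 hmG1) hdG1
lemma hnegIG1 : negIU ∈ G1 := by
  rw [show negIU = fU * mU * (dU * mU * dU) from Units.ext (by decide)]
  exact mul_mem (mul_mem hfG1 hmG1) hnG1
lemma hDG1 : DU ∈ G1 := by
  rw [show DU = dU * negIU from Units.ext (by decide)]
  exact mul_mem hdG1 hnegIG1
lemma hm2G1 : m2U ∈ G1 := by
  rw [show m2U = negIU * mU from Units.ext (by decide)]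
  exact mul_mem hnegIG1 hmG1

lemma hfN : fU ∈ normalizerNeg2Mod8 :=
  Subgroup.subset_closure (Or.inl ⟨5, 0, by decide⟩)
lemma hmN : mU ∈ normalizerNeg2Mod8 :=
  Subgroup.subset_closure (Or.inl ⟨1, 1, by decide⟩)
lemma hnegIN : negIU ∈ normalizerNeg2Mod8 :=
  Subgroup.subset_closure (Or.inl ⟨-1, 0, by decide⟩)
lemma hDN : DU ∈ normalizerNeg2Mod8 :=
  Subgroup.subset_closure (Or.inr rfl)
lemma hdN : dU ∈ normalizerNeg2Mod8 := by
  rw [show dU = DU * negIU from Units.ext (by decide)]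
  exact mul_mem hDN hnegIN

lemma cartan_le_G1 : ∀ x : GL (Fin 2) (ZMod 8), x ∈ cartanNeg2Mod8 → x ∈ G1 := by
  rintro x ⟨a, b, hg⟩
  have hdet : IsUnit ((!![a, b; -2 * b, a] : Matrix (Fin 2) (Fin 2) (ZMod 8)).det) := by
    rw [← hg]; exact (Matrix.isUnit_iff_isUnit_det _).mp x.isUnit
  rw [Matrix.det_fin_two_of] at hdet
  fin_cases a <;> fin_cases b
  · exact absurd hdet (by decide)
  · exact absurd hdet (by decide)
  · exact absurd hdet (by decide)
  · exact absurd hdet (by decide)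
  · exact absurd hdet (by decide)
  · exact absurd hdet (by decide)
  · exact absurd hdet (by decide)
  · exact absurd hdet (by decide)
  · rw [show x = 1 from Units.ext (by rw [hg]; decide)]; exact one_mem _
  · rw [show x = mU from Units.ext (by rw [hg]; decide)]; exact hmG1
  · rw [show x = fU * mU * (dU * mU * dU) * (dU * mU * dU) * (dU * mU * dU) from Units.ext (by rw [hg]; decide)]; exact (mul_mem (mul_mem (mul_mem (mul_mem hfG1 hmG1) hnG1) hnG1) hnG1)
  · rw [show x = mU * mU * mU * mU * (dU * mU * dU) from Units.ext (by rw [hg]; decide)]; exact (mul_mem (mul_mem (mul_mem (mul_mem hmG1 hmG1) hmG1) hmG1) hnG1)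
  · rw [show x = mU * mU * mU * mU from Units.ext (by rw [hg]; decide)]; exact (mul_mem (mul_mem (mul_mem hmG1 hmG1) hmG1) hmG1)
  · rw [show x = mU * mU * mU * mU * mU from Units.ext (by rw [hg]; decide)]; exact (mul_mem (mul_mem (mul_mem (mul_mem hmG1 hmG1) hmG1) hmG1) hmG1)
  · rw [show x = fU * mU * mU * mU * (dU * mU * dU) from Units.ext (by rw [hg]; decide)]; exact (mul_mem (mul_mem (mul_mem (mul_mem hfG1 hmG1) hmG1) hmG1) hnG1)
  · rw [show x = (dU * mU * dU) from Units.ext (by rw [hg]; decide)]; exact hnG1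
  · exact absurd hdet (by decide)
  · exact absurd hdet (by decide)
  · exact absurd hdet (by decide)
  · exact absurd hdet (by decide)
  · exact absurd hdet (by decide)
  · exact absurd hdet (by decide)
  · exact absurd hdet (by decide)
  · exact absurd hdet (by decide)
  · rw [show x = mU * (dU * mU * dU) from Units.ext (by rw [hg]; decide)]; exact (mul_mem hmG1 hnG1)
  · rw [show x = mU * mU * mU from Units.ext (by rw [hg]; decide)]; exact (mul_mem (mul_mem hmG1 hmG1) hmG1)
  · rw [show x = fU * mU * mU from Units.ext (by rw [hg]; decide)]; exact (mul_mem (mul_mem hfG1 hmG1) hmG1)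
  · rw [show x = mU * mU * (dU * mU * dU) from Units.ext (by rw [hg]; decide)]; exact (mul_mem (mul_mem hmG1 hmG1) hnG1)
  · rw [show x = mU * mU * mU * mU * mU * (dU * mU * dU) from Units.ext (by rw [hg]; decide)]; exact (mul_mem (mul_mem (mul_mem (mul_mem (mul_mem hmG1 hmG1) hmG1) hmG1) hmG1) hnG1)
  · rw [show x = mU * (dU * mU * dU) * (dU * mU * dU) from Units.ext (by rw [hg]; decide)]; exact (mul_mem (mul_mem hmG1 hnG1) hnG1)
  · rw [show x = fU * (dU * mU * dU) * (dU * mU * dU) from Units.ext (by rw [hg]; decide)]; exact (mul_mem (mul_mem hfG1 hnG1) hnG1)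
  · rw [show x = (dU * mU * dU) * (dU * mU * dU) * (dU * mU * dU) from Units.ext (by rw [hg]; decide)]; exact (mul_mem (mul_mem hnG1 hnG1) hnG1)
  · exact absurd hdet (by decide)
  · exact absurd hdet (by decide)
  · exact absurd hdet (by decide)
  · exact absurd hdet (by decide)
  · exact absurd hdet (by decide)
  · exact absurd hdet (by decide)
  · exact absurd hdet (by decide)
  · exact absurd hdet (by decide)
  · rw [show x = fU from Units.ext (by rw [hg]; decide)]; exact hfG1
  · rw [show x = fU * mU * mU * mU * mU * mU from Units.ext (by rw [hg]; decide)]; exact (mul_mem (mul_mem (mul_mem (mul_mem (mul_mem hfG1 hmG1) hmG1) hmG1) hmG1) hmG1)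
  · rw [show x = mU * (dU * mU * dU) * (dU * mU * dU) * (dU * mU * dU) from Units.ext (by rw [hg]; decide)]; exact (mul_mem (mul_mem (mul_mem hmG1 hnG1) hnG1) hnG1)
  · rw [show x = fU * (dU * mU * dU) from Units.ext (by rw [hg]; decide)]; exact (mul_mem hfG1 hnG1)
  · rw [show x = fU * mU * mU * mU * mU from Units.ext (by rw [hg]; decide)]; exact (mul_mem (mul_mem (mul_mem (mul_mem hfG1 hmG1) hmG1) hmG1) hmG1)
  · rw [show x = fU * mU from Units.ext (by rw [hg]; decide)]; exact (mul_mem hfG1 hmG1)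
  · rw [show x = mU * mU * mU * (dU * mU * dU) from Units.ext (by rw [hg]; decide)]; exact (mul_mem (mul_mem (mul_mem hmG1 hmG1) hmG1) hnG1)
  · rw [show x = fU * mU * mU * mU * mU * (dU * mU * dU) from Units.ext (by rw [hg]; decide)]; exact (mul_mem (mul_mem (mul_mem (mul_mem (mul_mem hfG1 hmG1) hmG1) hmG1) hmG1) hnG1)
  · exact absurd hdet (by decide)
  · exact absurd hdet (by decide)
  · exact absurd hdet (by decide)
  · exact absurd hdet (by decide)
  · exact absurd hdet (by decide)
  · exact absurd hdet (by decide)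
  · exact absurd hdet (by decide)
  · exact absurd hdet (by decide)
  · rw [show x = fU * mU * (dU * mU * dU) from Units.ext (by rw [hg]; decide)]; exact (mul_mem (mul_mem hfG1 hmG1) hnG1)
  · rw [show x = fU * mU * (dU * mU * dU) * (dU * mU * dU) from Units.ext (by rw [hg]; decide)]; exact (mul_mem (mul_mem (mul_mem hfG1 hmG1) hnG1) hnG1)
  · rw [show x = mU * mU from Units.ext (by rw [hg]; decide)]; exact (mul_mem hmG1 hmG1)
  · rw [show x = fU * (dU * mU * dU) * (dU * mU * dU) * (dU * mU * dU) from Units.ext (by rw [hg]; decide)]; exact (mul_mem (mul_mem (mul_mem hfG1 hnG1) hnG1) hnG1)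
  · rw [show x = fU * mU * mU * mU * mU * mU * (dU * mU * dU) from Units.ext (by rw [hg]; decide)]; exact (mul_mem (mul_mem (mul_mem (mul_mem (mul_mem (mul_mem hfG1 hmG1) hmG1) hmG1) hmG1) hmG1) hnG1)
  · rw [show x = fU * mU * mU * mU from Units.ext (by rw [hg]; decide)]; exact (mul_mem (mul_mem (mul_mem hfG1 hmG1) hmG1) hmG1)
  · rw [show x = (dU * mU * dU) * (dU * mU * dU) from Units.ext (by rw [hg]; decide)]; exact (mul_mem hnG1 hnG1)
  · rw [show x = fU * mU * mU * (dU * mU * dU) from Units.ext (by rw [hg]; decide)]; exact (mul_mem (mul_mem (mul_mem hfG1 hmG1) hmG1) hnG1)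

lemma keyG1 : G1 = normalizerNeg2Mod8 := by
  apply le_antisymm
  · refine (Subgroup.closure_le _).mpr ?_
    rintro x hx
    simp only [Set.mem_setOf_eq, Set.mem_insert_iff, Set.mem_singleton_iff] at hx
    rcases hx with h | h | h
    · rw [show x = dU from Units.ext h]; exact hdN
    · rw [show x = fU from Units.ext (by rw [h]; decide)]; exact hfN
    · rw [show x = mU from Units.ext h]; exact hmN
  · refine (Subgroup.closure_le _).mpr ?_
    rintro x (hc | hD)
    · exact cartan_le_G1 x hc
    · rw [show x = DU from Units.ext hD]; exact hDG1

lemma key2 : glGen8 {!![-1, 0; 0, 1], (5 : Matrix (Fin 2) (Fin 2) (ZMod 8)), !![1, 1; -2, 1]} = G1 := by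
  apply le_antisymm
  · refine (Subgroup.closure_le _).mpr ?_
    rintro x hx
    simp only [Set.mem_setOf_eq, Set.mem_insert_iff, Set.mem_singleton_iff] at hx
    rcases hx with h | h | h
    · rw [show x = DU from Units.ext h]; exact hDG1
    · rw [show x = fU from Units.ext (by rw [h]; decide)]; exact hfG1
    · rw [show x = mU from Units.ext h]; exact hmG1
  · refine (Subgroup.closure_le _).mpr ?_
    have hD : DU ∈ glGen8 {!![-1, 0; 0, 1], (5 : Matrix (Fin 2) (Fin 2) (ZMod 8)), !![1, 1; -2, 1]} :=
      Subgroup.subset_closure (Or.inl rfl)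
    have hf : fU ∈ glGen8 {!![-1, 0; 0, 1], (5 : Matrix (Fin 2) (Fin 2) (ZMod 8)), !![1, 1; -2, 1]} :=
      Subgroup.subset_closure (Or.inr (Or.inl (by decide)))
    have hm : mU ∈ glGen8 {!![-1, 0; 0, 1], (5 : Matrix (Fin 2) (Fin 2) (ZMod 8)), !![1, 1; -2, 1]} :=
      Subgroup.subset_closure (Or.inr (Or.inr rfl))
    have hnegI : negIU ∈ glGen8 {!![-1, 0; 0, 1], (5 : Matrix (Fin 2) (Fin 2) (ZMod 8)), !![1, 1; -2, 1]} := by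
      rw [show negIU = fU * mU * (DU * mU * DU) from Units.ext (by decide)]
      exact mul_mem (mul_mem hf hm) (mul_mem (mul_mem hD hm) hD)
    rintro x hx
    simp only [Set.mem_setOf_eq, Set.mem_insert_iff, Set.mem_singleton_iff] at hx
    rcases hx with h | h | h
    · rw [show x = DU * negIU from Units.ext (by rw [h]; decide)]; exact mul_mem hD hnegI
    · rw [show x = fU from Units.ext (by rw [h]; decide)]; exact hf
    · rw [show x = mU from Units.ext h]; exact hm

lemma key3 : glGen8 {!![1, 0; 0, -1], (5 : Matrix (Fin 2) (Fin 2) (ZMod 8)), !![-1, -1; 2, -1]} = G1 := by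
  apply le_antisymm
  · refine (Subgroup.closure_le _).mpr ?_
    rintro x hx
    simp only [Set.mem_setOf_eq, Set.mem_insert_iff, Set.mem_singleton_iff] at hx
    rcases hx with h | h | h
    · rw [show x = dU from Units.ext h]; exact hdG1
    · rw [show x = fU from Units.ext (by rw [h]; decide)]; exact hfG1
    · rw [show x = m2U from Units.ext h]; exact hm2G1
  · refine (Subgroup.closure_le _).mpr ?_
    have hd : dU ∈ glGen8 {!![1, 0; 0, -1], (5 : Matrix (Fin 2) (Fin 2) (ZMod 8)), !![-1, -1; 2, -1]} :=
      Subgroup.subset_closure (Or.inl rfl)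
    have hf : fU ∈ glGen8 {!![1, 0; 0, -1], (5 : Matrix (Fin 2) (Fin 2) (ZMod 8)), !![-1, -1; 2, -1]} :=
      Subgroup.subset_closure (Or.inr (Or.inl (by decide)))
    have hm2 : m2U ∈ glGen8 {!![1, 0; 0, -1], (5 : Matrix (Fin 2) (Fin 2) (ZMod 8)), !![-1, -1; 2, -1]} :=
      Subgroup.subset_closure (Or.inr (Or.inr rfl))
    have hnegI : negIU ∈ glGen8 {!![1, 0; 0, -1], (5 : Matrix (Fin 2) (Fin 2) (ZMod 8)), !![-1, -1; 2, -1]} := by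
      rw [show negIU = fU * m2U * (dU * m2U * dU) from Units.ext (by decide)]
      exact mul_mem (mul_mem hf hm2) (mul_mem (mul_mem hd hm2) hd)
    rintro x hx
    simp only [Set.mem_setOf_eq, Set.mem_insert_iff, Set.mem_singleton_iff] at hx
    rcases hx with h | h | h
    · rw [show x = dU from Units.ext h]; exact hd
    · rw [show x = fU from Units.ext (by rw [h]; decide)]; exact hf
    · rw [show x = negIU * m2U from Units.ext (by rw [h]; decide)]; exact mul_mem hnegI hm2

lemma key4 : glGen8 {!![-1, 0; 0, 1], (5 : Matrix (Fin 2) (Fin 2) (ZMod 8)), !![-1, -1; 2, -1]} = G1 := by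
  apply le_antisymm
  · refine (Subgroup.closure_le _).mpr ?_
    rintro x hx
    simp only [Set.mem_setOf_eq, Set.mem_insert_iff, Set.mem_singleton_iff] at hx
    rcases hx with h | h | h
    · rw [show x = DU from Units.ext h]; exact hDG1
    · rw [show x = fU from Units.ext (by rw [h]; decide)]; exact hfG1
    · rw [show x = m2U from Units.ext h]; exact hm2G1
  · refine (Subgroup.closure_le _).mpr ?_
    have hD : DU ∈ glGen8 {!![-1, 0; 0, 1], (5 : Matrix (Fin 2) (Fin 2) (ZMod 8)), !![-1, -1; 2, -1]} :=
      Subgroup.subset_closure (Or.inl rfl)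
    have hf : fU ∈ glGen8 {!![-1, 0; 0, 1], (5 : Matrix (Fin 2) (Fin 2) (ZMod 8)), !![-1, -1; 2, -1]} :=
      Subgroup.subset_closure (Or.inr (Or.inl (by decide)))
    have hm2 : m2U ∈ glGen8 {!![-1, 0; 0, 1], (5 : Matrix (Fin 2) (Fin 2) (ZMod 8)), !![-1, -1; 2, -1]} :=
      Subgroup.subset_closure (Or.inr (Or.inr rfl))
    have hnegI : negIU ∈ glGen8 {!![-1, 0; 0, 1], (5 : Matrix (Fin 2) (Fin 2) (ZMod 8)), !![-1, -1; 2, -1]} := by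
      rw [show negIU = fU * m2U * (DU * m2U * DU) from Units.ext (by decide)]
      exact mul_mem (mul_mem hf hm2) (mul_mem (mul_mem hD hm2) hD)
    rintro x hx
    simp only [Set.mem_setOf_eq, Set.mem_insert_iff, Set.mem_singleton_iff] at hx
    rcases hx with h | h | h
    · rw [show x = DU * negIU from Units.ext (by rw [h]; decide)]; exact mul_mem hD hnegI
    · rw [show x = fU from Units.ext (by rw [h]; decide)]; exact hf
    · rw [show x = negIU * m2U from Units.ext (by rw [h]; decide)]; exact mul_mem hnegI hm2

end Stmt14Aux


/-- In `GL(2, ℤ/8ℤ)`, the four subgroups `⟨diag(±1,∓1), 5·Id, ±[[1,1],[−2,1]]⟩`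
are all equal to `N_{−2,0}(8)`. -/
theorem stmt_14 :
    glGen8 {!![1, 0; 0, -1], (5 : Matrix (Fin 2) (Fin 2) (ZMod 8)), !![1, 1; -2, 1]} =
        normalizerNeg2Mod8 ∧
    glGen8 {!![-1, 0; 0, 1], (5 : Matrix (Fin 2) (Fin 2) (ZMod 8)), !![1, 1; -2, 1]} =
        normalizerNeg2Mod8 ∧
    glGen8 {!![1, 0; 0, -1], (5 : Matrix (Fin 2) (Fin 2) (ZMod 8)), !![-1, -1; 2, -1]} =
        normalizerNeg2Mod8 ∧
    glGen8 {!![-1, 0; 0, 1], (5 : Matrix (Fin 2) (Fin 2) (ZMod 8)), !![-1, -1; 2, -1]} =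
        normalizerNeg2Mod8 := by
  exact ⟨keyG1, key2.trans keyG1, key3.trans keyG1, key4.trans keyG1⟩
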